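/- arXiv:2006.16663 — 2 statements merged into one kernel-verified Lean document; each statement's English description precedes it below -/
import Mathlib

section
/- Let α, λ₀, λ, ρ, A be real constants with ρ < 0, let m(t) = -α λ₀ ρ⁻¹ + (α λ₀ ρ⁻¹ + λ) e^{ρ t}, and let v : ℝ → ℝ be differentiable and satisfy v'(t) = A m(t) + 2 ρ v(t) for all t ≥ 0 with v(0) = λ². Then v is bounded on [0, ∞), v(t) → A α λ₀ (2ρ²)⁻¹ as t → ∞, and the variance v(t) − m(t)² converges to A α λ₀ (2ρ²)⁻¹ − (α λ₀ ρ⁻¹)² as t → ∞. -/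
/-!
The equation `v' = A m + 2 r v` is linear with a forcing term that is a constant plus a
multiple of `e^{r t}`, so it has the explicit solution `p + q e^{r t} + C e^{2 r t}` matching
`v 0 = l ^ 2`. Uniqueness for Lipschitz ODEs identifies `v` with it on `[0, ∞)`, and for
`r < 0` both exponentials lie in `(0, 1]` and decay to `0`, which gives the bound and the limits.
-/

open Filter Real Set Topology

theorem hasDerivAt_exp_const_mul (c t : ℝ) :
    HasDerivAt (fun s => exp (c * s)) (c * exp (c * t)) t := by
  simpa [mul_comm] using ((hasDerivAt_id t).const_mul c).exp

theorem tendsto_exp_const_mul_atTop {c : ℝ} (hc : c < 0) :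
    Tendsto (fun t => exp (c * t)) atTop (𝓝 0) :=
  tendsto_exp_atBot.comp (tendsto_id.const_mul_atTop_of_neg hc)

theorem eqOn_Ici_of_hasDerivAt_affine {f y z : ℝ → ℝ} {k : ℝ}
    (hy : ∀ t, 0 ≤ t → HasDerivAt y (f t + k * y t) t)
    (hz : ∀ t, 0 ≤ t → HasDerivAt z (f t + k * z t) t) (h0 : y 0 = z 0) :
    EqOn y z (Ici 0) := by
  intro b hb
  have hlip : ∀ t, LipschitzWith ‖k‖₊ (fun x => f t + k * x) := fun t => by
    simpa using (LipschitzWith.const (f t)).add (lipschitzWith_smul k)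
  refine ODE_solution_unique (v := fun t x => f t + k * x) hlip
    (fun t ht => (hy t ht.1).continuousAt.continuousWithinAt)
    (fun t ht => (hy t ht.1).hasDerivWithinAt)
    (fun t ht => (hz t ht.1).continuousAt.continuousWithinAt)
    (fun t ht => (hz t ht.1).hasDerivWithinAt) h0 ⟨hb, le_rfl⟩

/-- Solves `y' = A (μ + κ e^{r t}) + 2 r y`, `y 0 = y₀` when `r ≠ 0`. -/
noncomputable def affineExpSolution (A μ κ r y₀ t : ℝ) : ℝ :=
  -(A * μ) / (2 * r) - A * κ / r * exp (r * t) +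
    (y₀ + A * μ / (2 * r) + A * κ / r) * exp (2 * r * t)

section AffineExpSolution

variable (A μ κ r y₀ : ℝ)

theorem affineExpSolution_zero : affineExpSolution A μ κ r y₀ 0 = y₀ := by
  simp only [affineExpSolution, mul_zero, exp_zero]
  ring

theorem hasDerivAt_affineExpSolution (hr : r ≠ 0) (t : ℝ) :
    HasDerivAt (affineExpSolution A μ κ r y₀)
      (A * (μ + κ * exp (r * t)) + 2 * r * affineExpSolution A μ κ r y₀ t) t := by
  have h := (((hasDerivAt_exp_const_mul r t).const_mul (A * κ / r)).const_sub
    (-(A * μ) / (2 * r))).add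
      ((hasDerivAt_exp_const_mul (2 * r) t).const_mul (y₀ + A * μ / (2 * r) + A * κ / r))
  refine h.congr_deriv ?_
  simp only [affineExpSolution]
  field_simp
  ring

theorem tendsto_affineExpSolution (hr : r < 0) :
    Tendsto (affineExpSolution A μ κ r y₀) atTop (𝓝 (-(A * μ) / (2 * r))) := by
  have h2r : 2 * r < 0 := by linarith
  have h := (((tendsto_exp_const_mul_atTop hr).const_mul (A * κ / r)).const_sub
    (-(A * μ) / (2 * r))).add
      ((tendsto_exp_const_mul_atTop h2r).const_mul (y₀ + A * μ / (2 * r) + A * κ / r))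
  simp only [mul_zero, sub_zero, add_zero] at h
  exact h

theorem abs_affineExpSolution_le (hr : r ≤ 0) {t : ℝ} (ht : 0 ≤ t) :
    |affineExpSolution A μ κ r y₀ t| ≤
      |A * μ / (2 * r)| + |A * κ / r| + |y₀ + A * μ / (2 * r) + A * κ / r| := by
  have abs_mul_exp_le : ∀ c s : ℝ, s ≤ 0 → |c * exp s| ≤ |c| := fun c s hs => by
    rw [abs_mul, abs_of_pos (exp_pos s)]
    exact mul_le_of_le_one_right (abs_nonneg c) (exp_le_one_iff.mpr hs)
  have h1 := abs_mul_exp_le (A * κ / r) (r * t) (mul_nonpos_of_nonpos_of_nonneg hr ht)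
  have h2 := abs_mul_exp_le (y₀ + A * μ / (2 * r) + A * κ / r) (2 * r * t) (by nlinarith)
  calc |affineExpSolution A μ κ r y₀ t|
      ≤ |-(A * μ) / (2 * r)| + |A * κ / r * exp (r * t)|
          + |(y₀ + A * μ / (2 * r) + A * κ / r) * exp (2 * r * t)| :=
        (abs_add_le _ _).trans (by gcongr; exact abs_sub _ _)
    _ ≤ _ := by rw [neg_div, abs_neg]; linarith

end AffineExpSolution

/-- for ρ < 0, the second moment v (solving v' = A m + 2ρ v, v(0) = λ²,
with m the explicit first moment) is bounded on [0, ∞), v(t) → A α λ₀ (2ρ²)⁻¹, and the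
variance v(t) − m(t)² converges to A α λ₀ (2ρ²)⁻¹ − (α λ₀ ρ⁻¹)². -/
theorem second_moment_bounded_and_tendsto (a l0 l r A : ℝ) (hr : r < 0)
    (m : ℝ → ℝ)
    (hmdef : ∀ t : ℝ, m t = -(a * l0) * r⁻¹ + (a * l0 * r⁻¹ + l) * Real.exp (r * t))
    (v : ℝ → ℝ)
    (hv : Differentiable ℝ v)
    (hode : ∀ t : ℝ, 0 ≤ t → deriv v t = A * m t + 2 * r * v t)
    (h0 : v 0 = l ^ 2) :
    (∃ M : ℝ, ∀ t : ℝ, 0 ≤ t → |v t| ≤ M) ∧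
      Tendsto v atTop (nhds (A * a * l0 * (2 * r ^ 2)⁻¹)) ∧
      Tendsto (fun t => v t - (m t) ^ 2) atTop
        (nhds (A * a * l0 * (2 * r ^ 2)⁻¹ - (a * l0 * r⁻¹) ^ 2)) := by
  set μ := -(a * l0) * r⁻¹
  set κ := a * l0 * r⁻¹ + l
  have hvw : EqOn v (affineExpSolution A μ κ r (l ^ 2)) (Ici 0) := by
    refine eqOn_Ici_of_hasDerivAt_affine (f := fun t => A * m t) (k := 2 * r)
      (fun t ht => hode t ht ▸ (hv t).hasDerivAt) (fun t _ => ?_)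
      (h0.trans (affineExpSolution_zero ..).symm)
    simpa only [hmdef] using hasDerivAt_affineExpSolution A μ κ r (l ^ 2) hr.ne t
  have hv_lim : Tendsto v atTop (𝓝 (A * a * l0 * (2 * r ^ 2)⁻¹)) := by
    have hlim : -(A * μ) / (2 * r) = A * a * l0 * (2 * r ^ 2)⁻¹ := by
      field_simp
      ring
    refine hlim ▸ (tendsto_affineExpSolution A μ κ r (l ^ 2) hr).congr' ?_
    filter_upwards [eventually_ge_atTop 0] with t ht using (hvw ht).symm
  have hm_lim : Tendsto m atTop (𝓝 μ) := by
    have h := ((tendsto_exp_const_mul_atTop hr).const_mul κ).const_add μ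
    rw [mul_zero, add_zero] at h
    exact h.congr fun t => (hmdef t).symm
  refine ⟨⟨_, fun t ht => (congrArg abs (hvw ht)).trans_le
    (abs_affineExpSolution_le A μ κ r (l ^ 2) hr.le ht)⟩, hv_lim, ?_⟩
  have hμ : μ ^ 2 = (a * l0 * r⁻¹) ^ 2 := by ring
  exact hμ ▸ hv_lim.sub (hm_lim.pow 2)
end

section
/- Let C > 0 and let (h_n)_{n ≥ 0} be a sequence of continuous functions h_n : [0, ∞) → [0, ∞) such that h₀(t) ≤ 1 for all t ≥ 0, and for every n ≥ 1 and t ≥ 0, h_n(t) ≤ C + n C ∫₀ᵗ h_{n−1}(s) ds + Σ_{j=0}^{n−2} (n choose j) C ∫₀ᵗ h_{j+1}(s) ds (the sum being empty for n = 1). Then for each n ≥ 1 there exists a polynomial p_n of degree at most n with nonnegative coefficients, depending only on n and C, such that h_n(t) ≤ p_n(t) for all t ≥ 0. -/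
/-!
Bounding every `h_k` with `k ≤ n` by a single `M (1 + t)ⁿ` makes the induction on `n` immediate:
each integral in the inequality for `h_{n+1}` is at most `t M (1 + t)ⁿ ≤ M (1 + t)ⁿ⁺¹`, and
`M (1 + X)ⁿ` is a polynomial of degree `n` with nonnegative coefficients.
-/

open MeasureTheory

theorem intervalIntegral_le_mul_of_le {f : ℝ → ℝ} {t B : ℝ} (ht : 0 ≤ t)
    (hf : ContinuousOn f (Set.Icc 0 t)) (hB : ∀ s ∈ Set.Icc 0 t, f s ≤ B) :
    ∫ s in (0 : ℝ)..t, f s ≤ t * B := by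
  calc ∫ s in (0 : ℝ)..t, f s ≤ ∫ _ in (0 : ℝ)..t, B :=
        intervalIntegral.integral_mono_on ht (hf.intervalIntegrable_of_Icc ht)
          intervalIntegrable_const hB
    _ = t * B := by simp

theorem mul_one_add_pow_le_one_add_pow_succ {t : ℝ} (ht : 0 ≤ t) (m : ℕ) :
    t * (1 + t) ^ m ≤ (1 + t) ^ (m + 1) := by
  rw [pow_succ']
  gcongr
  linarith

section IntegralSystem

variable {C : ℝ} {h : ℕ → ℝ → ℝ}

theorem exists_le_mul_one_add_pow_succ_of_integral_system (hC : 0 ≤ C)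
    (hcont : ∀ n : ℕ, ContinuousOn (h n) (Set.Ici 0))
    (hrec : ∀ n : ℕ, 1 ≤ n → ∀ t : ℝ, 0 ≤ t →
      h n t ≤ C + (n : ℝ) * C * (∫ s in (0 : ℝ)..t, h (n - 1) s)
        + ∑ j ∈ Finset.range (n - 1),
            (n.choose j : ℝ) * C * (∫ s in (0 : ℝ)..t, h (j + 1) s))
    {m : ℕ} {M : ℝ} (hM0 : 0 ≤ M) (hM : ∀ k ≤ m, ∀ t : ℝ, 0 ≤ t → h k t ≤ M * (1 + t) ^ m) :
    ∃ K : ℝ, ∀ t : ℝ, 0 ≤ t → h (m + 1) t ≤ K * (1 + t) ^ (m + 1) := by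
  refine ⟨C * (1 + ((m + 1 : ℝ) + ∑ j ∈ Finset.range m, ((m + 1).choose j : ℝ)) * M),
    fun t ht ↦ ?_⟩
  have hint : ∀ k ≤ m, ∫ s in (0 : ℝ)..t, h k s ≤ t * (M * (1 + t) ^ m) := fun k hk ↦
    intervalIntegral_le_mul_of_le ht ((hcont k).mono Set.Icc_subset_Ici_self)
      fun s hs ↦ (hM k hk s hs.1).trans (by gcongr <;> linarith [hs.1, hs.2])
  have hgrowth := mul_one_add_pow_le_one_add_pow_succ ht m
  have hone : 1 ≤ (1 + t) ^ (m + 1) := one_le_pow₀ (by linarith)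
  calc h (m + 1) t
      ≤ C + (m + 1 : ℝ) * C * (∫ s in (0 : ℝ)..t, h m s)
        + ∑ j ∈ Finset.range m,
            ((m + 1).choose j : ℝ) * C * (∫ s in (0 : ℝ)..t, h (j + 1) s) := by
        simpa using hrec (m + 1) (Nat.le_add_left 1 m) t ht
    _ ≤ C + (m + 1 : ℝ) * C * (t * (M * (1 + t) ^ m))
        + ∑ j ∈ Finset.range m, ((m + 1).choose j : ℝ) * C * (t * (M * (1 + t) ^ m)) := by
        gcongr with j hj
        · exact hint m le_rfl
        · exact hint (j + 1) (Finset.mem_range.mp hj)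
    _ = C + ((m + 1 : ℝ) + ∑ j ∈ Finset.range m, ((m + 1).choose j : ℝ)) * M * C
          * (t * (1 + t) ^ m) := by
        rw [← Finset.sum_mul, ← Finset.sum_mul]
        ring
    _ ≤ C * (1 + t) ^ (m + 1)
        + ((m + 1 : ℝ) + ∑ j ∈ Finset.range m, ((m + 1).choose j : ℝ)) * M * C
          * (1 + t) ^ (m + 1) := by
        gcongr
        exact le_mul_of_one_le_right hC hone
    _ = _ := by ring

theorem exists_le_mul_one_add_pow_of_integral_system (hC : 0 ≤ C)
    (hcont : ∀ n : ℕ, ContinuousOn (h n) (Set.Ici 0))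
    (hzero : ∀ t : ℝ, 0 ≤ t → h 0 t ≤ 1)
    (hrec : ∀ n : ℕ, 1 ≤ n → ∀ t : ℝ, 0 ≤ t →
      h n t ≤ C + (n : ℝ) * C * (∫ s in (0 : ℝ)..t, h (n - 1) s)
        + ∑ j ∈ Finset.range (n - 1),
            (n.choose j : ℝ) * C * (∫ s in (0 : ℝ)..t, h (j + 1) s))
    (n : ℕ) : ∃ M : ℝ, 0 ≤ M ∧ ∀ k ≤ n, ∀ t : ℝ, 0 ≤ t → h k t ≤ M * (1 + t) ^ n := by
  induction n with
  | zero => exact ⟨1, zero_le_one, fun k hk t ht ↦ by simpa [Nat.le_zero.mp hk] using hzero t ht⟩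
  | succ m ih =>
    obtain ⟨M, hM0, hM⟩ := ih
    obtain ⟨K, hK⟩ := exists_le_mul_one_add_pow_succ_of_integral_system hC hcont hrec hM0 hM
    refine ⟨max M K, le_max_of_le_left hM0, fun k hk t ht ↦ ?_⟩
    rcases Nat.of_le_succ hk with hk | rfl
    · calc h k t ≤ M * (1 + t) ^ m := hM k hk t ht
        _ ≤ M * (1 + t) ^ (m + 1) := by gcongr <;> linarith
        _ ≤ _ := by gcongr; exact le_max_left _ _
    · exact (hK t ht).trans (by gcongr; exact le_max_right _ _)

end IntegralSystem

theorem moments_polynomially_bounded_general (C : ℝ) (hC : 0 < C) (h : ℕ → ℝ → ℝ)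
    (hcont : ∀ n : ℕ, ContinuousOn (h n) (Set.Ici 0))
    (hzero : ∀ t : ℝ, 0 ≤ t → h 0 t ≤ 1)
    (hrec : ∀ n : ℕ, 1 ≤ n → ∀ t : ℝ, 0 ≤ t →
      h n t ≤ C + (n : ℝ) * C * (∫ s in (0 : ℝ)..t, h (n - 1) s)
        + ∑ j ∈ Finset.range (n - 1),
            (n.choose j : ℝ) * C * (∫ s in (0 : ℝ)..t, h (j + 1) s)) :
    ∀ n : ℕ, 1 ≤ n → ∃ p : Polynomial ℝ,
      p.natDegree ≤ n ∧ (∀ i : ℕ, 0 ≤ p.coeff i) ∧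
        ∀ t : ℝ, 0 ≤ t → h n t ≤ p.eval t := by
  intro n _
  obtain ⟨M, hM0, hM⟩ := exists_le_mul_one_add_pow_of_integral_system hC.le hcont hzero hrec n
  refine ⟨Polynomial.C M * (Polynomial.X + 1) ^ n, ?_, fun i ↦ ?_, fun t ht ↦ ?_⟩
  · compute_degree
  · rw [Polynomial.coeff_C_mul, Polynomial.coeff_X_add_one_pow]
    positivity
  · simpa [add_comm] using hM n le_rfl t ht

/-- analytic core of the finite moments lemma. If h₀ ≤ 1 and each h_n
satisfies the system of integral inequalities
h_n(t) ≤ C + n C ∫₀ᵗ h_{n−1} + Σ_{j=0}^{n−2} (n choose j) C ∫₀ᵗ h_{j+1},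
then each h_n (n ≥ 1) is bounded on [0, ∞) by a polynomial of degree at most n with
nonnegative coefficients. -/
theorem moments_polynomially_bounded (C : ℝ) (hC : 0 < C) (h : ℕ → ℝ → ℝ)
    (hcont : ∀ n : ℕ, ContinuousOn (h n) (Set.Ici 0))
    (hnonneg : ∀ n : ℕ, ∀ t : ℝ, 0 ≤ t → 0 ≤ h n t)
    (hzero : ∀ t : ℝ, 0 ≤ t → h 0 t ≤ 1)
    (hrec : ∀ n : ℕ, 1 ≤ n → ∀ t : ℝ, 0 ≤ t →
      h n t ≤ C + (n : ℝ) * C * (∫ s in (0 : ℝ)..t, h (n - 1) s)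
        + ∑ j ∈ Finset.range (n - 1),
            (n.choose j : ℝ) * C * (∫ s in (0 : ℝ)..t, h (j + 1) s)) :
    ∀ n : ℕ, 1 ≤ n → ∃ p : Polynomial ℝ,
      p.natDegree ≤ n ∧ (∀ i : ℕ, 0 ≤ p.coeff i) ∧
        ∀ t : ℝ, 0 ≤ t → h n t ≤ p.eval t :=
  moments_polynomially_bounded_general C hC h hcont hzero hrec
end
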